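/- arXiv:2402.17998 — 3 statements merged into one kernel-verified Lean document; each statement's English description precedes it below -/
import Mathlib

section
/- Every subgroup H of Aff(F_q) is conjugate to a subgroup of the form V ⋊ Λ_d, where d divides q − 1, Λ_d is the unique subgroup of order d of the scalar subgroup Λ ≅ F_q^×, and V is an F_{p^m}-linear subspace of the translation subgroup T ≅ F_q, with m the least positive divisor of n such that d divides p^m − 1. -/
variable {F : Type*} [Field F]

/-- The affine permutation `x ↦ a * x + b` of a field `F`. -/
def affinePerm (a : Fˣ) (b : F) : Equiv.Perm F :=
  (Equiv.mulLeft₀ (a : F) a.ne_zero).trans (Equiv.addRight b)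

@[simp] lemma affinePerm_apply (a : Fˣ) (b x : F) : affinePerm a b x = a * x + b := rfl

/-- The one-dimensional affine group over `F`, as a subgroup of the permutation group. -/
def Aff (F : Type*) [Field F] : Subgroup (Equiv.Perm F) where
  carrier := {g | ∃ (a : Fˣ) (b : F), g = affinePerm a b}
  one_mem' := ⟨1, 0, by ext x; simp⟩
  mul_mem' := by
    rintro f g ⟨a, b, rfl⟩ ⟨c, d, rfl⟩
    exact ⟨a * c, a * d + b, by ext x; simp [mul_add, mul_assoc, add_assoc]⟩
  inv_mem' := by
    rintro f ⟨a, b, rfl⟩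
    refine ⟨a⁻¹, -(((a⁻¹ : Fˣ) : F) * b), inv_eq_iff_mul_eq_one.mpr ?_⟩
    ext x
    simp [mul_add, mul_assoc]

lemma ap_mul (a c : Fˣ) (b e : F) :
    affinePerm a b * affinePerm c e = affinePerm (a * c) ((a : F) * e + b) := by
  ext x; simp [mul_add, mul_assoc, add_assoc]

lemma ap_one : (affinePerm 1 0 : Equiv.Perm F) = 1 := by ext x; simp

lemma ap_congr {a a' : Fˣ} {b b' : F} (h1 : a = a') (h2 : b = b') :
    affinePerm a b = affinePerm a' b' := by rw [h1, h2]

lemma ap_inv (a : Fˣ) (b : F) :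
    (affinePerm a b)⁻¹ = affinePerm a⁻¹ (-(((a⁻¹ : Fˣ) : F) * b)) := by
  refine (eq_inv_of_mul_eq_one_left ?_).symm
  rw [ap_mul]
  ext x
  simp

lemma ap_inj {a a' : Fˣ} {b b' : F} (h : affinePerm a b = affinePerm a' b') :
    a = a' ∧ b = b' := by
  have h0 : (a : F) * 0 + b = a' * 0 + b' := by
    have := congrArg (fun (f : Equiv.Perm F) => f 0) h
    simpa using this
  have h1 : (a : F) * 1 + b = a' * 1 + b' := by
    have := congrArg (fun (f : Equiv.Perm F) => f 1) h
    simpa using this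
  simp only [mul_zero, zero_add] at h0
  subst h0
  simp only [mul_one, add_left_inj] at h1
  exact ⟨Units.ext h1, rfl⟩

def affProj (H : Subgroup (Equiv.Perm F)) : Subgroup Fˣ where
  carrier := {a | ∃ b, affinePerm a b ∈ H}
  one_mem' := ⟨0, by rw [ap_one]; exact H.one_mem⟩
  mul_mem' := by
    rintro a c ⟨b, hb⟩ ⟨e, he⟩
    exact ⟨(a : F) * e + b, by rw [← ap_mul]; exact H.mul_mem hb he⟩
  inv_mem' := by
    rintro a ⟨b, hb⟩
    exact ⟨_, by rw [← ap_inv]; exact H.inv_mem hb⟩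

lemma mem_affProj {H : Subgroup (Equiv.Perm F)} {a : Fˣ} :
    a ∈ affProj H ↔ ∃ b, affinePerm a b ∈ H := Iff.rfl

def scalarHom : Fˣ →* Equiv.Perm F where
  toFun := fun u => affinePerm u 0
  map_one' := ap_one
  map_mul' := fun u v => by rw [ap_mul]; exact ap_congr rfl (by simp)

lemma conj_trans (t : F) (c : Fˣ) (b : F) :
    affinePerm 1 t * affinePerm c b * (affinePerm 1 t)⁻¹ =
      affinePerm c (b + t - (c : F) * t) := by
  rw [ap_inv, ap_mul, ap_mul]
  refine ap_congr (by simp) ?_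
  push_cast
  ring

lemma conj_scalar (u : Fˣ) (x : F) :
    affinePerm u 0 * affinePerm 1 x * (affinePerm u 0)⁻¹ = affinePerm 1 ((u : F) * x) := by
  rw [ap_inv, ap_mul, ap_mul]
  refine ap_congr (by simp) ?_
  push_cast
  ring

lemma ap_mul_inv_scalar (c : Fˣ) (B : F) :
    affinePerm c B * (affinePerm c 0)⁻¹ = affinePerm 1 B := by
  rw [ap_inv, ap_mul]
  refine ap_congr (by simp) (by push_cast; ring)

lemma ncard_pow_eq_self_le [Fintype F] (N : ℕ) (hN : 1 < N) :
    {c : F | c ^ N = c}.ncard ≤ N := by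
  classical
  set q : Polynomial F := Polynomial.X ^ N - Polynomial.X with hq
  have hdeg : q.natDegree = N := by
    rw [hq, Polynomial.natDegree_sub_eq_left_of_natDegree_lt] <;>
      simp [Polynomial.natDegree_X_pow, hN]
  have hq0 : q ≠ 0 := by
    intro h
    rw [h] at hdeg
    simp at hdeg
    omega
  have hsub : {c : F | c ^ N = c} ⊆ ↑q.roots.toFinset := by
    intro c hc
    have hcroot : c ∈ q.roots := by
      rw [Polynomial.mem_roots hq0]
      simp only [hq, Polynomial.IsRoot.def, Polynomial.eval_sub, Polynomial.eval_pow,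
        Polynomial.eval_X, sub_eq_zero]
      exact hc
    simpa using hcroot
  calc {c : F | c ^ N = c}.ncard ≤ (↑q.roots.toFinset : Set F).ncard :=
        Set.ncard_le_ncard hsub (Set.toFinite _)
    _ = q.roots.toFinset.card := Set.ncard_coe_finset _
    _ ≤ Multiset.card q.roots := Multiset.toFinset_card_le _
    _ ≤ q.natDegree := Polynomial.card_roots' q
    _ = N := hdeg

lemma exists_min_m (p n : ℕ) (hp : p.Prime) (hn : 0 < n) (F : Type*) [Field F] [Fintype F]
    (hF : Fintype.card F = p ^ n) (a : Fˣ) :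
    ∃ m : ℕ, 0 < m ∧ m ∣ n ∧ orderOf a ∣ p ^ m - 1 ∧
      (∀ m', 0 < m' → orderOf a ∣ p ^ m' - 1 → m ≤ m') ∧
      (∀ c : F, c ^ p ^ m = c → c ∈ Subring.closure {(a : F)}) := by
  classical
  haveI : Fact p.Prime := ⟨hp⟩
  haveI hcharF : CharP F p := by
    obtain ⟨n', hp', hcard⟩ := FiniteField.card F (ringChar F)
    have hdvd : p ∣ ringChar F := by
      refine hp.dvd_of_dvd_pow (n := (n' : ℕ)) ?_
      rw [← hcard, hF]
      exact dvd_pow_self p hn.ne'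
    have : p = ringChar F := (Nat.prime_dvd_prime_iff_eq hp hp').mp hdvd
    rw [this]; exact ringChar.charP F
  set Kr : Subring F := Subring.closure {(a : F)} with hKrdef
  haveI : Finite Kr := Subtype.finite
  letI : Fintype Kr := Fintype.ofFinite Kr
  letI : Field Kr := (Finite.isField_of_domain Kr).toField
  haveI : CharP Kr p := CharP.subring F p Kr
  letI : Algebra (ZMod p) Kr := ZMod.algebra Kr p
  set m := Module.finrank (ZMod p) Kr with hm
  have hcardKr : Fintype.card Kr = p ^ m := by
    rw [Module.card_eq_pow_finrank (K := ZMod p) (V := Kr), ZMod.card]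
  have hm0 : 0 < m := by
    by_contra h
    push_neg at h
    interval_cases m
    · rw [pow_zero] at hcardKr
      exact absurd hcardKr Fintype.one_lt_card.ne'
  have hmn : m ∣ n := by
    letI : Algebra Kr F := Kr.subtype.toAlgebra
    have hcardF : Fintype.card F = Fintype.card Kr ^ Module.finrank Kr F :=
      Module.card_eq_pow_finrank
    have hpow : p ^ n = p ^ (m * Module.finrank Kr F) := by
      rw [← hF, hcardF, hcardKr, ← pow_mul]
    exact ⟨_, Nat.pow_right_injective hp.two_le hpow⟩
  have ha_mem : (a : F) ∈ Kr := Subring.subset_closure (Set.mem_singleton _)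
  have hd : orderOf a ∣ p ^ m - 1 := by
    have hane : (⟨(a : F), ha_mem⟩ : Kr) ≠ 0 := by
      intro h
      exact a.ne_zero (congrArg Subtype.val h)
    have h1 : (⟨(a : F), ha_mem⟩ : Kr) ^ (Fintype.card Kr - 1) = 1 :=
      FiniteField.pow_card_sub_one_eq_one _ hane
    have h2 : (a : F) ^ (p ^ m - 1) = 1 := by
      have := congrArg Subtype.val h1
      rw [hcardKr] at this
      simpa using this
    refine orderOf_dvd_of_pow_eq_one (Units.ext ?_)
    simpa using h2
  refine ⟨m, hm0, hmn, hd, ?_, ?_⟩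
  · intro m' hm' hdvd
    have hN1 : 1 < p ^ m' := Nat.one_lt_pow hm'.ne' hp.one_lt
    have haL : (a : F) ^ p ^ m' = (a : F) := by
      have h1 : (a : Fˣ) ^ (p ^ m' - 1) = 1 := orderOf_dvd_iff_pow_eq_one.mp hdvd
      have h2 : (a : F) ^ (p ^ m' - 1) = 1 := by
        have := congrArg Units.val h1
        simpa using this
      calc (a : F) ^ p ^ m' = (a : F) ^ (p ^ m' - 1) * a := by
            rw [← pow_succ]
            congr 1
            omega
        _ = a := by rw [h2, one_mul]
    have hKrL : Kr ≤ (iterateFrobenius F p m').eqLocus (RingHom.id F) := by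
      rw [hKrdef, Subring.closure_le]
      intro x hx
      rw [Set.mem_singleton_iff] at hx
      subst hx
      show iterateFrobenius F p m' _ = _
      rw [iterateFrobenius_def]
      simpa using haL
    have hsub : (Kr : Set F) ⊆ {c : F | c ^ p ^ m' = c} := by
      intro c hc
      have := hKrL hc
      have : iterateFrobenius F p m' c = RingHom.id F c := this
      rw [iterateFrobenius_def] at this
      simpa using this
    have hle := Set.ncard_le_ncard hsub (Set.toFinite _)
    have hncard : (Kr : Set F).ncard = p ^ m := by
      rw [← Nat.card_coe_set_eq, SetLike.coe_sort_coe, Nat.card_eq_fintype_card, hcardKr]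
    rw [hncard] at hle
    have := hle.trans (ncard_pow_eq_self_le _ hN1)
    exact (Nat.pow_le_pow_iff_right hp.one_lt).mp this
  · have hncard : (Kr : Set F).ncard = p ^ m := by
      rw [← Nat.card_coe_set_eq, SetLike.coe_sort_coe, Nat.card_eq_fintype_card, hcardKr]
    have hsub : (Kr : Set F) ⊆ {c : F | c ^ p ^ m = c} := by
      intro c hc
      have h1 : (⟨c, hc⟩ : Kr) ^ Fintype.card Kr = ⟨c, hc⟩ := FiniteField.pow_card _
      have := congrArg Subtype.val h1
      rw [hcardKr] at this
      simpa using this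
    have hEq : (Kr : Set F) = {c : F | c ^ p ^ m = c} := by
      refine Set.eq_of_subset_of_ncard_le hsub ?_ (Set.toFinite _)
      rw [hncard]
      exact ncard_pow_eq_self_le _ (Nat.one_lt_pow hm0.ne' hp.one_lt)
    intro c hc
    rw [← SetLike.mem_coe, hEq]
    exact hc

/-- Classification of subgroups of `Aff F` for `F = F_{p^n}`: every subgroup is conjugate
(within `Aff F`) to one of the form `V ⋊ Λ_d`, where `d ∣ q - 1`, `Λ_d = {a : Fˣ | a^d = 1}`
is the unique subgroup of order `d` of the scalars, and `V` is a linear subspace of the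
translations over the subfield `F_{p^m} = {c : F | c^(p^m) = c}`, with `m` the least
positive divisor of `n` such that `d ∣ p^m - 1`. -/
theorem subgroup_classification (p n : ℕ) (hp : p.Prime) (hn : 0 < n)
    (F : Type*) [Field F] [Fintype F] (hF : Fintype.card F = p ^ n)
    (H : Subgroup (Equiv.Perm F)) (hH : H ≤ Aff F) :
    ∃ (d m : ℕ) (V : Set F) (g : Equiv.Perm F), g ∈ Aff F ∧
      d ∣ Fintype.card F - 1 ∧
      -- `m` is the least positive divisor of `n` with `d ∣ p^m - 1`
      (0 < m ∧ m ∣ n ∧ d ∣ p ^ m - 1 ∧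
        ∀ m', 0 < m' → m' ∣ n → d ∣ p ^ m' - 1 → m ≤ m') ∧
      -- `V` is an `F_{p^m}`-linear subspace of the translations
      ((0 : F) ∈ V ∧ (∀ x ∈ V, ∀ y ∈ V, x + y ∈ V) ∧
        (∀ c : F, c ^ (p ^ m) = c → ∀ x ∈ V, c * x ∈ V)) ∧
      -- the conjugate of `H` by `g` is `V ⋊ Λ_d`
      ((fun x => g * x * g⁻¹) '' (H : Set (Equiv.Perm F)) =
        {h : Equiv.Perm F | ∃ (a : Fˣ) (b : F), h = affinePerm a b ∧ a ^ d = 1 ∧ b ∈ V}) := by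
  classical
  set D := affProj H with hDdef
  obtain ⟨⟨a, haD⟩, hgen⟩ := IsCyclic.exists_generator (α := D)
  set d := Nat.card D with hd
  have horder : orderOf a = d := by
    rw [hd, ← orderOf_eq_card_of_forall_mem_zpowers hgen]
    exact orderOf_injective D.subtype D.subtype_injective ⟨a, haD⟩
  have hd0 : 0 < d := Nat.card_pos
  have hddvd : d ∣ Fintype.card F - 1 := by
    have h1 := Subgroup.card_subgroup_dvd_card D
    have h2 : Nat.card Fˣ = Fintype.card F - 1 := by
      rw [Nat.card_eq_fintype_card, Fintype.card_units]
    rwa [h2] at h1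
  -- the subgroup of d-th roots of unity
  set E : Subgroup Fˣ :=
    { carrier := {x : Fˣ | x ^ d = 1}
      one_mem' := one_pow d
      mul_mem' := by
        intro x y hx hy
        show (x * y) ^ d = 1
        rw [mul_pow, hx, hy, one_mul]
      inv_mem' := by
        intro x hx
        show x⁻¹ ^ d = 1
        rw [inv_pow, hx, inv_one] } with hEdef
  have hmemE : ∀ x : Fˣ, x ∈ E ↔ x ^ d = 1 := fun x => Iff.rfl
  have hDE : D ≤ E := by
    intro c hc
    rw [hmemE]
    have h1 : (⟨c, hc⟩ : D) ^ d = 1 := by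
      rw [hd]
      exact pow_card_eq_one'
    have := congrArg (Subtype.val) h1
    simpa using this
  have hcardE : Nat.card E ≤ d := by
    have hfilter := IsCyclic.card_pow_eq_one_le (α := Fˣ) (n := d) hd0
    calc Nat.card E = Fintype.card {x : Fˣ // x ^ d = 1} := by
          rw [Nat.card_eq_fintype_card]
          exact Fintype.card_congr (Equiv.subtypeEquivRight hmemE)
      _ = (Finset.univ.filter fun x : Fˣ => x ^ d = 1).card := Fintype.card_subtype _
      _ ≤ d := hfilter
  have hDeqE : D = E := Subgroup.eq_of_le_of_card_ge hDE hcardE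
  have hmemD : ∀ c : Fˣ, c ∈ D ↔ c ^ d = 1 := by
    intro c
    rw [hDeqE]
    exact hmemE c
  obtain ⟨m, hm0, hmn, hmd, hmin, hmem⟩ := exists_min_m p n hp hn F hF a
  rw [horder] at hmd hmin
  obtain ⟨b0, hb0⟩ := haD
  set t : F := if a = 1 then 0 else -b0 / (1 - (a : F)) with ht
  set g := affinePerm (1 : Fˣ) t with hg
  have hgAff : g ∈ Aff F := ⟨1, t, rfl⟩
  set H' := Subgroup.map (MulAut.conj g).toMonoidHom H with hH'
  have hmemH' : ∀ x, x ∈ H' ↔ ∃ h1 ∈ H, g * h1 * g⁻¹ = x := by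
    intro x
    simp only [hH', Subgroup.mem_map, MulEquiv.coe_toMonoidHom, MulAut.conj_apply]
  have himg : (fun x => g * x * g⁻¹) '' (H : Set (Equiv.Perm F)) = ↑H' := by
    rw [hH', Subgroup.coe_map]
    ext x
    simp [MulAut.conj_apply]
  set V : Set F := {b | affinePerm 1 b ∈ H'} with hV
  -- the scalar part `affinePerm a 0` belongs to `H'`
  have hs : affinePerm a 0 ∈ H' := by
    by_cases ha1 : a = 1
    · rw [ha1, ap_one]
      exact H'.one_mem
    · have htval : t = -b0 / (1 - (a : F)) := by rw [ht, if_neg ha1]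
      have h1a : (1 : F) - (a : F) ≠ 0 := by
        refine sub_ne_zero.mpr fun h => ha1 (Units.ext ?_)
        simpa using h.symm
      have hconj : g * affinePerm a b0 * g⁻¹ = affinePerm a 0 := by
        rw [hg, conj_trans]
        refine ap_congr rfl ?_
        rw [htval]
        field_simp
        ring
      exact (hmemH' _).mpr ⟨affinePerm a b0, hb0, hconj⟩
  have hscalar : ∀ c : Fˣ, c ∈ D → affinePerm c 0 ∈ H' := by
    intro c hc
    obtain ⟨k, hk⟩ := hgen ⟨c, hc⟩
    have hk' : a ^ k = c := by
      have := congrArg (Subtype.val) hk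
      simpa using this
    have h2 : affinePerm c 0 = (affinePerm a 0) ^ k := by
      rw [← hk']
      exact map_zpow scalarHom a k
    rw [h2]
    exact H'.zpow_mem hs k
  have hV0 : (0 : F) ∈ V := by
    show affinePerm 1 (0 : F) ∈ H'
    rw [ap_one]
    exact H'.one_mem
  have hVadd : ∀ x ∈ V, ∀ y ∈ V, x + y ∈ V := by
    intro x hx y hy
    show affinePerm 1 (x + y) ∈ H'
    have h1 : affinePerm (1 : Fˣ) x * affinePerm 1 y ∈ H' := H'.mul_mem hx hy
    rwa [ap_mul, ap_congr (mul_one 1) (show ((1 : Fˣ) : F) * y + x = x + y by push_cast; ring)]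
      at h1
  have hVneg : ∀ x ∈ V, -x ∈ V := by
    intro x hx
    show affinePerm 1 (-x) ∈ H'
    have h1 : (affinePerm (1 : Fˣ) x)⁻¹ ∈ H' := H'.inv_mem hx
    rwa [ap_inv, ap_congr inv_one (show -(((1⁻¹ : Fˣ) : F) * x) = -x by push_cast; ring)] at h1
  have hVa : ∀ x ∈ V, (a : F) * x ∈ V := by
    intro x hx
    show affinePerm 1 ((a : F) * x) ∈ H'
    have h1 : affinePerm a 0 * affinePerm 1 x * (affinePerm a 0)⁻¹ ∈ H' :=
      H'.mul_mem (H'.mul_mem hs hx) (H'.inv_mem hs)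
    rwa [conj_scalar] at h1
  have hVsmul : ∀ c : F, c ^ p ^ m = c → ∀ x ∈ V, c * x ∈ V := by
    intro c hc
    have hcK := hmem c hc
    refine Subring.closure_induction (p := fun y _ => ∀ x ∈ V, y * x ∈ V) ?_ ?_ ?_ ?_ ?_ ?_ hcK
    · rintro y hy
      rw [Set.mem_singleton_iff] at hy
      subst hy
      exact hVa
    · intro x hx
      rw [zero_mul]
      exact hV0
    · intro x hx
      rw [one_mul]
      exact hx
    · intro y z hy hz hpy hpz x hx
      rw [add_mul]
      exact hVadd _ (hpy x hx) _ (hpz x hx)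
    · intro y hy hpy x hx
      rw [neg_mul]
      exact hVneg _ (hpy x hx)
    · intro y z hy hz hpy hpz x hx
      rw [mul_assoc]
      exact hpy _ (hpz x hx)
  refine ⟨d, m, V, g, hgAff, hddvd, ⟨hm0, hmn, hmd, fun m' h1 _ h3 => hmin m' h1 h3⟩,
    ⟨hV0, hVadd, hVsmul⟩, ?_⟩
  rw [himg]
  ext h
  simp only [SetLike.mem_coe, Set.mem_setOf_eq]
  constructor
  · intro hh
    obtain ⟨h1, hh1, hconj⟩ := (hmemH' h).mp hh
    obtain ⟨c, b1, rfl⟩ := hH hh1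
    rw [hg, conj_trans] at hconj
    have hcD : c ∈ D := ⟨b1, hh1⟩
    refine ⟨c, b1 + t - (c : F) * t, hconj.symm, (hmemD c).mp hcD, ?_⟩
    show affinePerm 1 (b1 + t - (c : F) * t) ∈ H'
    have hmm : affinePerm c (b1 + t - (c : F) * t) * (affinePerm c 0)⁻¹ ∈ H' := by
      rw [hconj]
      exact H'.mul_mem hh (H'.inv_mem (hscalar c hcD))
    rwa [ap_mul_inv_scalar] at hmm
  · rintro ⟨c, b, rfl, hcd, hbV⟩
    have hcD : c ∈ D := (hmemD c).mpr hcd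
    have h1 : affinePerm (1 : Fˣ) b * affinePerm c 0 ∈ H' := H'.mul_mem hbV (hscalar c hcD)
    rwa [ap_mul, ap_congr (one_mul c) (show ((1 : Fˣ) : F) * 0 + b = b by push_cast; ring)] at h1
end

section
/- A subgroup of Aff(F_q) of type (d, k) contains a subgroup of type (e, j) if and only if e divides d and j ≤ k, where a subgroup has type (d, k) when it is conjugate to V ⋊ Λ_d with V an F_p-subspace of T of dimension k (such a type requires m | k for m the least divisor of n with d | p^m − 1). -/
/-!
Conjugation by `x ↦ c x + t` sends `x ↦ a x + b` to `x ↦ a x + (c b + t - a t)`: it keeps the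
scalar part and, on translations, multiplies by `c`. Hence if a conjugate of `W ⋊ Λ_e` lies in
`V ⋊ Λ_d`, then `Λ_e ⊆ Λ_d`, so `e ∣ d` because `F^×` is cyclic, and `c W ⊆ V`, so `j ≤ k`.
Conversely, `V` is stable under `Λ_d ⊇ Λ_e`, so it is a vector space over the subfield `R` of
those `x` with `x ^ p ^ m = x` that stabilise `V`. Since `e ∣ p ^ m - 1`, `R` contains `Λ_e`, and
`|R| = p ^ s` with `s ∣ m ∣ j`; so `V` has an `R`-subspace `W` with `p ^ j` elements, and the
conjugate of `W ⋊ Λ_e` back into `H` has type `(e, j)`.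
-/

variable {F : Type*} [Field F]

/-- A subgroup of `Aff F` has *type `(d, k)`* when it is conjugate within `Aff F` to
`V ⋊ Λ_d` with `V` an additive subgroup of the translations of cardinality `p^k`
(an `F_p`-subspace of dimension `k`). -/
def IsType {F : Type*} [Field F] (p : ℕ) (H : Subgroup (Equiv.Perm F)) (d k : ℕ) : Prop :=
  ∃ g ∈ Aff F, ∃ V : AddSubgroup F, Nat.card V = p ^ k ∧
    (fun x => g * x * g⁻¹) '' (H : Set (Equiv.Perm F)) =
      {h : Equiv.Perm F | ∃ (a : Fˣ) (b : F), h = affinePerm a b ∧ a ^ d = 1 ∧ b ∈ V}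

lemma affinePerm_one_zero : affinePerm (1 : Fˣ) (0 : F) = 1 := by
  ext x; simp

lemma affinePerm_mul (a c : Fˣ) (b d : F) :
    affinePerm a b * affinePerm c d = affinePerm (a * c) (a * d + b) := by
  ext x
  simp only [Equiv.Perm.mul_apply, affinePerm_apply, Units.val_mul]
  ring

lemma affinePerm_inj {a c : Fˣ} {b d : F} :
    affinePerm a b = affinePerm c d ↔ a = c ∧ b = d := by
  refine ⟨fun h => ?_, fun ⟨hac, hbd⟩ => hac ▸ hbd ▸ rfl⟩
  have h0 : b = d := by simpa using congrArg (· 0) h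
  have h1 : (a : F) + b = c + d := by simpa using congrArg (· 1) h
  exact ⟨Units.ext (by rw [h0] at h1; exact add_right_cancel h1), h0⟩

lemma affinePerm_inv (a : Fˣ) (b : F) :
    (affinePerm a b)⁻¹ = affinePerm a⁻¹ (-(a⁻¹ * b)) := by
  rw [inv_eq_iff_mul_eq_one, affinePerm_mul, ← affinePerm_one_zero, mul_inv_cancel]
  congr 1
  simp

lemma affinePerm_conj (c a : Fˣ) (t b : F) :
    affinePerm c t * affinePerm a b * (affinePerm c t)⁻¹ =
      affinePerm a (c * b + t - a * t) := by
  ext x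
  rw [affinePerm_inv, Equiv.Perm.mul_apply, Equiv.Perm.mul_apply]
  simp only [affinePerm_apply, Units.val_inv_eq_inv_val]
  field_simp
  ring

/-- `V ⋊ Λ_d`, the right-hand side in the definition of `IsType`. -/
def affineSet (d : ℕ) (V : AddSubgroup F) : Set (Equiv.Perm F) :=
  {h | ∃ (a : Fˣ) (b : F), h = affinePerm a b ∧ a ^ d = 1 ∧ b ∈ V}

@[simp] lemma affinePerm_mem_affineSet_iff {d : ℕ} {V : AddSubgroup F} {a : Fˣ} {b : F} :
    affinePerm a b ∈ affineSet d V ↔ a ^ d = 1 ∧ b ∈ V := by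
  constructor
  · rintro ⟨a', b', h, ha', hb'⟩
    obtain ⟨rfl, rfl⟩ := affinePerm_inj.mp h
    exact ⟨ha', hb'⟩
  · rintro ⟨ha, hb⟩
    exact ⟨a, b, rfl, ha, hb⟩

lemma affineSet_mono {d e : ℕ} {V W : AddSubgroup F} (hed : e ∣ d) (hWV : W ≤ V) :
    affineSet e W ⊆ affineSet d V := by
  rintro _ ⟨a, b, rfl, ha, hb⟩
  obtain ⟨c, rfl⟩ := hed
  exact ⟨a, b, rfl, by rw [pow_mul, ha, one_pow], hWV hb⟩

def affineSubgroup (d : ℕ) (V : AddSubgroup F)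
    (hV : ∀ a : Fˣ, a ^ d = 1 → ∀ b ∈ V, (a : F) * b ∈ V) : Subgroup (Equiv.Perm F) where
  carrier := affineSet d V
  one_mem' := ⟨1, 0, affinePerm_one_zero.symm, one_pow d, V.zero_mem⟩
  mul_mem' := by
    rintro _ _ ⟨a, b, rfl, ha, hb⟩ ⟨c, d, rfl, hc, hd⟩
    rw [affinePerm_mul, affinePerm_mem_affineSet_iff, mul_pow, ha, hc, one_mul]
    exact ⟨rfl, V.add_mem (hV a ha d hd) hb⟩
  inv_mem' := by
    rintro _ ⟨a, b, rfl, ha, hb⟩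
    have ha' : a⁻¹ ^ d = 1 := by rw [inv_pow, ha, inv_one]
    rw [affinePerm_inv, affinePerm_mem_affineSet_iff]
    exact ⟨ha', V.neg_mem (hV _ ha' b hb)⟩

lemma image_conj_eq_map {G : Type*} [Group G] (g : G) (H : Subgroup G) :
    (fun x => g * x * g⁻¹) '' (H : Set G) = H.map (MulAut.conj g).toMonoidHom := by
  rw [Subgroup.coe_map]
  rfl

lemma conj_mem_of_image_conj_eq {G : Type*} [Group G] {H K : Subgroup G} (hKH : K ≤ H)
    {g g' : G} {S T : Set G} (hH : (fun x => g * x * g⁻¹) '' (H : Set G) = S)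
    (hK : (fun x => g' * x * g'⁻¹) '' (K : Set G) = T) {x : G} (hx : x ∈ T) :
    g * g'⁻¹ * x * (g * g'⁻¹)⁻¹ ∈ S := by
  rw [← hK] at hx
  obtain ⟨y, hy, rfl⟩ := hx
  rw [← hH]
  exact ⟨y, hKH hy, by group⟩

/-- Conjugating the translation by `b` with the scalar `a` gives the translation by `a * b`. -/
lemma mul_mem_of_image_conj_eq_affineSet {H : Subgroup (Equiv.Perm F)} {g : Equiv.Perm F}
    {d : ℕ} {V : AddSubgroup F} (hH : (fun x => g * x * g⁻¹) '' (H : Set _) = affineSet d V)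
    {a : Fˣ} (ha : a ^ d = 1) {b : F} (hb : b ∈ V) : (a : F) * b ∈ V := by
  set L := H.map (MulAut.conj g).toMonoidHom
  have hL : ∀ {x}, x ∈ L ↔ x ∈ affineSet d V := by
    rw [← hH, image_conj_eq_map]; rfl
  have hscalar : affinePerm a 0 ∈ L := hL.mpr (by simp [ha])
  have htransl : affinePerm 1 b ∈ L := hL.mpr (by simp [hb])
  have := hL.mp (L.mul_mem (L.mul_mem hscalar htransl) (L.inv_mem hscalar))
  rw [affinePerm_conj, affinePerm_mem_affineSet_iff] at this
  simpa using this.2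

lemma IsCyclic.dvd_of_forall_pow_eq_one {G : Type*} [Group G] [IsCyclic G] [Finite G]
    {d e : ℕ} (he : e ∣ Nat.card G) (h : ∀ a : G, a ^ e = 1 → a ^ d = 1) : e ∣ d := by
  obtain ⟨g, hg⟩ := IsCyclic.exists_ofOrder_eq_natCard (α := G)
  rw [← hg] at he
  set ζ := g ^ (orderOf g / e)
  have hζ : orderOf ζ = e := orderOf_pow_orderOf_div (hg ▸ Nat.card_pos.ne') he
  have hζe : ζ ^ e = 1 := hζ ▸ pow_orderOf_eq_one ζ
  exact hζ ▸ orderOf_dvd_of_pow_eq_one (h ζ hζe)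

lemma natCard_le_of_mul_mem [Finite F] {V W : AddSubgroup F} (c : Fˣ)
    (h : ∀ b ∈ W, (c : F) * b ∈ V) : Nat.card W ≤ Nat.card V :=
  Nat.card_le_card_of_injective (fun w => ⟨c * w, h w w.2⟩) fun _ _ hw =>
    Subtype.ext (mul_left_cancel₀ c.ne_zero (congrArg Subtype.val hw))

theorem dvd_and_le_of_le_of_isType [Finite F] {p d k e j : ℕ} (hp : 1 < p)
    {H K : Subgroup (Equiv.Perm F)} (hKH : K ≤ H) (hH : IsType p H d k) (hK : IsType p K e j)
    (he : e ∣ Nat.card F - 1) : e ∣ d ∧ j ≤ k := by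
  obtain ⟨g, hg, V, hV, hgH⟩ := hH
  obtain ⟨g', hg', W, hW, hgK⟩ := hK
  obtain ⟨c, t, hu⟩ := mul_mem hg (inv_mem hg')
  have hconj (a : Fˣ) (b : F) (ha : a ^ e = 1) (hb : b ∈ W) :
      a ^ d = 1 ∧ c * b + t - a * t ∈ V := by
    have := conj_mem_of_image_conj_eq (S := affineSet d V) hKH hgH hgK
      (affinePerm_mem_affineSet_iff.mpr ⟨ha, hb⟩)
    rwa [hu, affinePerm_conj, affinePerm_mem_affineSet_iff] at this
  refine ⟨IsCyclic.dvd_of_forall_pow_eq_one (by rwa [Nat.card_units])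
    fun a ha => (hconj a 0 ha W.zero_mem).1, ?_⟩
  have hcard := natCard_le_of_mul_mem c fun b hb => by simpa using (hconj 1 b (one_pow e) hb).2
  rwa [hV, hW, Nat.pow_le_pow_iff_right hp] at hcard

lemma Nat.dvd_of_pow_sub_one_dvd_pow_sub_one {p s m : ℕ} (hp : 1 < p)
    (h : p ^ s - 1 ∣ p ^ m - 1) : s ∣ m := by
  have hgcd := Nat.gcd_eq_left h
  rw [Nat.pow_sub_one_gcd_pow_sub_one] at hgcd
  have hpow : p ^ Nat.gcd s m = p ^ s := by
    have := Nat.one_le_pow (Nat.gcd s m) p (by omega)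
    have := Nat.one_le_pow s p (by omega)
    omega
  exact Nat.gcd_eq_left_iff_dvd.mp (Nat.pow_right_injective hp hpow)

lemma FiniteField.dvd_of_forall_pow_pow_eq_self {K : Type*} [Field K] [Finite K] {p s m : ℕ}
    (hp : 1 < p) (hK : Nat.card K = p ^ s) (h : ∀ x : K, x ^ p ^ m = x) : s ∣ m := by
  obtain ⟨u, hu⟩ := IsCyclic.exists_ofOrder_eq_natCard (α := Kˣ)
  refine Nat.dvd_of_pow_sub_one_dvd_pow_sub_one hp ?_
  rw [← hK, ← Nat.card_units, ← hu]
  apply orderOf_dvd_of_pow_eq_one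
  have hfix : u ^ (p ^ m - 1) * u = u := by
    rw [← pow_succ, Nat.sub_add_cancel (Nat.one_le_pow _ _ (by omega))]
    exact Units.ext (by push_cast; exact h u)
  simpa using hfix

lemma Submodule.exists_le_natCard_eq_pow {K M : Type*} [Field K] [AddCommGroup M] [Module K M]
    (V : Submodule K M) {i : ℕ} (hi : i ≤ Module.finrank K V) :
    ∃ W ≤ V, Nat.card W = Nat.card K ^ i := by
  obtain ⟨f, hf⟩ := exists_linearIndependent_of_le_finrank hi
  refine ⟨span K (Set.range (V.subtype ∘ f)), span_le.mpr ?_, ?_⟩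
  · rintro _ ⟨x, rfl⟩
    exact (f x).2
  · have := Module.Finite.span_of_finite K (Set.finite_range (V.subtype ∘ f))
    rw [Module.natCard_eq_pow_finrank (K := K),
      finrank_span_eq_card (hf.map' V.subtype V.ker_subtype), Fintype.card_fin]

lemma Submodule.exists_le_natCard_eq_pow_of_dvd {K M : Type*} [Field K] [AddCommGroup M]
    [Module K M] {p s k j : ℕ} (hp : 1 < p) (hK : Nat.card K = p ^ s) (V : Submodule K M)
    (hV : Nat.card V = p ^ k) (hsj : s ∣ j) (hjk : j ≤ k) :
    ∃ W ≤ V, Nat.card W = p ^ j := by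
  have : Finite K := Nat.finite_of_card_ne_zero (by rw [hK]; positivity)
  have : Finite V := Nat.finite_of_card_ne_zero (by rw [hV]; positivity)
  have hs : 0 < s := by
    have := hK ▸ Finite.one_lt_card (α := K)
    exact Nat.pos_of_ne_zero (by rintro rfl; simp at this)
  have hk : k = s * Module.finrank K V := Nat.pow_right_injective hp <| by
    dsimp only
    rw [← hV, Module.natCard_eq_pow_finrank (K := K), hK, pow_mul]
  obtain ⟨i, rfl⟩ := hsj
  obtain ⟨W, hWV, hW⟩ := V.exists_le_natCard_eq_pow (Nat.le_of_mul_le_mul_left (hk ▸ hjk) hs)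
  exact ⟨W, hWV, by rw [hW, hK, pow_mul]⟩

def AddSubgroup.mulStabilizer {R : Type*} [Ring R] (V : AddSubgroup R) : Subring R where
  carrier := {r | ∀ b ∈ V, r * b ∈ V}
  one_mem' b hb := by rwa [one_mul]
  mul_mem' hr hs b hb := by rw [mul_assoc]; exact hr _ (hs b hb)
  zero_mem' b _ := by rw [zero_mul]; exact V.zero_mem
  add_mem' hr hs b hb := by rw [add_mul]; exact V.add_mem (hr b hb) (hs b hb)
  neg_mem' hr b hb := by rw [neg_mul]; exact V.neg_mem (hr b hb)

def AddSubgroup.toSubmoduleOfLE {R : Type*} [CommRing R] (V : AddSubgroup R) (S : Subring R)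
    (hS : S ≤ V.mulStabilizer) : Submodule S R where
  carrier := V
  add_mem' := V.add_mem
  zero_mem' := V.zero_mem
  smul_mem' r _ hb := hS r.2 _ hb

theorem exists_le_natCard_eq_of_forall_mul_mem [Finite F] {p : ℕ} [Fact p.Prime] [CharP F p]
    {e m j k : ℕ} {V : AddSubgroup F} (hV : Nat.card V = p ^ k)
    (hVe : ∀ a : Fˣ, a ^ e = 1 → ∀ b ∈ V, (a : F) * b ∈ V) (hem : e ∣ p ^ m - 1)
    (hmj : m ∣ j) (hjk : j ≤ k) :
    ∃ W ≤ V, Nat.card W = p ^ j ∧ ∀ a : Fˣ, a ^ e = 1 → ∀ b ∈ W, (a : F) * b ∈ W := by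
  have hp : p.Prime := Fact.out
  let R : Subring F := V.mulStabilizer ⊓ (iterateFrobenius F p m).eqLocus (RingHom.id F)
  have hroots (a : Fˣ) (ha : a ^ e = 1) : (a : F) ∈ R := by
    refine ⟨hVe a ha, ?_⟩
    obtain ⟨c, hc⟩ := hem
    have : a ^ (p ^ m - 1) * a = a := by rw [hc, pow_mul, ha, one_pow, one_mul]
    rw [← pow_succ, Nat.sub_add_cancel (Nat.one_le_pow _ _ hp.pos)] at this
    simp [iterateFrobenius_def, ← Units.val_pow_eq_pow_val, this]
  let : Field R := (Finite.isField_of_domain R).toField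
  have := Fintype.ofFinite R
  obtain ⟨s, -, hs⟩ := FiniteField.card R p
  have hR : Nat.card R = p ^ (s : ℕ) := by rw [Nat.card_eq_fintype_card, hs]
  have hsm : (s : ℕ) ∣ m := FiniteField.dvd_of_forall_pow_pow_eq_self (K := R) hp.one_lt hR
    fun x => Subtype.ext (by simpa [iterateFrobenius_def] using x.2.2)
  obtain ⟨W, hWV, hW⟩ := (V.toSubmoduleOfLE R inf_le_left).exists_le_natCard_eq_pow_of_dvd
    hp.one_lt hR hV (hsm.trans hmj) hjk
  exact ⟨W.toAddSubgroup, hWV, hW, fun a ha b hb => W.smul_mem ⟨a, hroots a ha⟩ hb⟩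

theorem exists_le_isType_of_dvd [Finite F] {p : ℕ} [Fact p.Prime] [CharP F p]
    {d k e j m : ℕ} {H : Subgroup (Equiv.Perm F)} (hH : IsType p H d k)
    (hem : e ∣ p ^ m - 1) (hmj : m ∣ j) (hed : e ∣ d) (hjk : j ≤ k) :
    ∃ K ≤ H, IsType p K e j := by
  obtain ⟨g, hg, V, hV, hgH⟩ := hH
  have hVe (a : Fˣ) (ha : a ^ e = 1) (b : F) (hb : b ∈ V) : (a : F) * b ∈ V := by
    obtain ⟨c, rfl⟩ := hed
    exact mul_mem_of_image_conj_eq_affineSet hgH (by rw [pow_mul, ha, one_pow]) hb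
  obtain ⟨W, hWV, hW, hWe⟩ := exists_le_natCard_eq_of_forall_mul_mem hV hVe hem hmj hjk
  refine ⟨(affineSubgroup e W hWe).comap (MulAut.conj g).toMonoidHom, ?_, g, hg, W, hW, ?_⟩
  · rw [← Subgroup.comap_map_eq_self_of_injective (f := (MulAut.conj g).toMonoidHom)
      (MulAut.conj g).injective H]
    refine Subgroup.comap_mono fun x hx => ?_
    rw [← SetLike.mem_coe, ← image_conj_eq_map, hgH]
    exact affineSet_mono hed hWV hx
  · rw [image_conj_eq_map, Subgroup.map_comap_eq_self_of_surjective
      (f := (MulAut.conj g).toMonoidHom) (MulAut.conj g).surjective]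
    rfl

theorem subgroup_of_type_iff_general (p n : ℕ) (hp : p.Prime)
    (F : Type*) [Field F] [Fintype F] (hF : Fintype.card F = p ^ n)
    (H : Subgroup (Equiv.Perm F))
    (d k : ℕ) (hdk : IsType p H d k)
    (e j : ℕ) (he : e ∣ Fintype.card F - 1)
    (m : ℕ) (hm : 0 < m ∧ m ∣ n ∧ e ∣ p ^ m - 1 ∧
      ∀ m', 0 < m' → m' ∣ n → e ∣ p ^ m' - 1 → m ≤ m')
    (hmj : m ∣ j) :
    (∃ K : Subgroup (Equiv.Perm F), K ≤ H ∧ IsType p K e j) ↔ e ∣ d ∧ j ≤ k := by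
  have := Fact.mk hp
  have := charP_of_card_eq_prime_pow hF
  constructor
  · rintro ⟨K, hKH, hK⟩
    exact dvd_and_le_of_le_of_isType hp.one_lt hKH hdk hK (by rwa [Nat.card_eq_fintype_card])
  · rintro ⟨hed, hjk⟩
    exact exists_le_isType_of_dvd hdk hm.2.2.1 hmj hed hjk

/-- A subgroup of `Aff F` of type `(d, k)` contains a subgroup of type `(e, j)` if and
only if `e ∣ d` and `j ≤ k` (for `(e, j)` an admissible type, i.e. `e ∣ q - 1` and
`m ∣ j` where `m` is the least positive divisor of `n` with `e ∣ p^m - 1`). -/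
theorem subgroup_of_type_iff (p n : ℕ) (hp : p.Prime) (hn : 0 < n)
    (F : Type*) [Field F] [Fintype F] (hF : Fintype.card F = p ^ n)
    (H : Subgroup (Equiv.Perm F)) (hH : H ≤ Aff F)
    (d k : ℕ) (hdk : IsType p H d k)
    (e j : ℕ) (he : e ∣ Fintype.card F - 1) (hj : j ≤ n)
    (m : ℕ) (hm : 0 < m ∧ m ∣ n ∧ e ∣ p ^ m - 1 ∧
      ∀ m', 0 < m' → m' ∣ n → e ∣ p ^ m' - 1 → m ≤ m')
    (hmj : m ∣ j) :
    (∃ K : Subgroup (Equiv.Perm F), K ≤ H ∧ IsType p K e j) ↔ e ∣ d ∧ j ≤ k :=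
  subgroup_of_type_iff_general p n hp F hF H d k hdk e j he m hm hmj
end

section
/- If q = p^n is a prime power with n ≥ 1 such that q − 1 = d^ν for some prime d and integer ν ≥ 2, then either n = 1 and p = 2^ν + 1 (so p is a Fermat prime and d = 2), or q = 9. -/
open Finset

private lemma odd_geom_sum {x : ℤ} (hx : Odd x) {m : ℕ} (hm : Odd m) :
    Odd (∑ i ∈ Finset.range m, x ^ i) := by
  rw [← Int.not_even_iff_odd, even_iff_two_dvd, show (2:ℤ) = ((2:ℕ):ℤ) by norm_num,
    ← ZMod.intCast_zmod_eq_zero_iff_dvd]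
  have hx1 : (x : ZMod 2) = 1 := by
    have h2 : ((x % 2 : ℤ) : ZMod 2) = ((x : ℤ) : ZMod 2) := by
      rw [ZMod.intCast_eq_intCast_iff']
      simp [Int.emod_emod_of_dvd]
    rw [← h2, Int.odd_iff.mp hx]; norm_num
  push_cast
  rw [hx1]
  simp only [one_pow, Finset.sum_const, Finset.card_range, nsmul_eq_mul, mul_one]
  have hm1 : ((m : ZMod 2)) = 1 := by
    obtain ⟨b, rfl⟩ := hm; push_cast; ring_nf; simp [show (2:ZMod 2)=0 from by decide]
  rw [hm1]; exact one_ne_zero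

private lemma no_odd_dvd_two_pow {t : ℤ} (k : ℕ) (h1 : 1 < t) (ho : Odd t)
    (hdvd : t ∣ (2:ℤ)^k) : False := by
  lift t to ℕ using (by omega) with t'
  have hdn : t' ∣ 2^k := by exact_mod_cast hdvd
  have hon : Odd t' := by exact_mod_cast ho
  have := Nat.Coprime.eq_one_of_dvd
    ((Nat.coprime_two_right.mpr hon).pow_right k) hdn
  omega

/-- If `q = p^n` is a prime power with `n ≥ 1` such that `q - 1 = d^ν` for a prime `d` and
an integer `ν ≥ 2`, then either `n = 1`, `d = 2` and `p = 2 ^ ν + 1` (a Fermat prime),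
or `q = 9`. -/
theorem prime_power_pred_prime_power (p n d ν : ℕ) (hp : p.Prime) (hd : d.Prime)
    (hn : 1 ≤ n) (hν : 2 ≤ ν) (h : p ^ n - 1 = d ^ ν) :
    (n = 1 ∧ d = 2 ∧ p = 2 ^ ν + 1) ∨ p ^ n = 9 := by
  have hp2 := hp.two_le
  have hd2 := hd.two_le
  have hq1 : 1 ≤ p ^ n := Nat.one_le_pow _ _ (by omega)
  have hkey : p ^ n = d ^ ν + 1 := by omega
  have hdν4 : 4 ≤ d ^ ν := by
    calc 4 = 2 ^ 2 := by norm_num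
    _ ≤ d ^ 2 := Nat.pow_le_pow_left hd2 2
    _ ≤ d ^ ν := Nat.pow_le_pow_right (by omega) hν
  rcases eq_or_lt_of_le hn with h1 | hn2
  · -- n = 1
    left
    have hpn : p = d ^ ν + 1 := by rw [← h1] at hkey; simpa using hkey
    have hpodd : Odd p := hp.odd_of_ne_two (by omega)
    obtain ⟨w, hw⟩ := hpodd
    have heven : 2 ∣ d ^ ν := by omega
    have hdvd : 2 ∣ d := Nat.Prime.dvd_of_dvd_pow Nat.prime_two heven
    have hdeq : d = 2 := ((Nat.prime_dvd_prime_iff_eq Nat.prime_two hd).mp hdvd).symm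
    subst hdeq
    exact ⟨h1.symm, rfl, by omega⟩
  · -- n ≥ 2
    have hn2' : 2 ≤ n := hn2
    rcases hp.eq_two_or_odd' with rfl | hpodd
    · -- p = 2 : contradiction
      exfalso
      have h2n : 4 ∣ 2 ^ n := by
        have : 2 ^ n = 4 * 2 ^ (n - 2) := by
          rw [show (4:ℕ) = 2^2 by norm_num, ← pow_add]
          congr 1; omega
        omega
      have hdodd : Odd d := by
        rcases Nat.even_or_odd d with he | ho
        · obtain ⟨c, hc⟩ := he
          have : 2 ∣ d ^ ν := Dvd.dvd.pow ⟨c, by omega⟩ (by omega)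
          omega
        · exact ho
      rcases Nat.even_or_odd ν with hνe | hνo
      · -- ν even : mod 4
        obtain ⟨k, hk⟩ := hνe
        have hodd : Odd (d ^ k) := hdodd.pow
        obtain ⟨t, ht⟩ := hodd
        have h4 : d ^ ν = 4 * (t * t + t) + 1 := by
          have hsq : d ^ ν = d ^ k * d ^ k := by rw [hk, ← pow_add]
          rw [hsq, ht]; ring
        omega
      · -- ν odd : use geometric sum with x = -d
        set t : ℤ := ∑ i ∈ Finset.range ν, (-(d:ℤ)) ^ i with hts
        have hid : t * (-(d:ℤ) - 1) = (-(d:ℤ)) ^ ν - 1 := geom_sum_mul _ ν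
        have hνneg : (-(d:ℤ)) ^ ν = -((d:ℤ) ^ ν) := hνo.neg_pow _
        have hid2 : t * ((d:ℤ) + 1) = (d:ℤ) ^ ν + 1 := by
          rw [hνneg] at hid; linarith [hid]
        have hpow : (d:ℤ) ^ ν + 1 = 2 ^ n := by exact_mod_cast hkey.symm
        have htodd : Odd t := by
          refine odd_geom_sum ?_ hνo
          exact (Int.odd_coe_nat d).mpr hdodd |>.neg
        have hdν4' : (4:ℤ) ≤ (d:ℤ) ^ ν := by exact_mod_cast hdν4
        have hdpos : (0:ℤ) < (d:ℤ) + 1 := by positivity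
        have hd2z : (2:ℤ) ≤ (d:ℤ) := by exact_mod_cast hd2
        have hsq : (d:ℤ) ^ 2 ≤ (d:ℤ) ^ ν := pow_le_pow_right₀ (by linarith) hν
        have ht1 : 1 < t := by
          by_contra hle
          push_neg at hle
          have h1 : t * ((d:ℤ) + 1) ≤ 1 * ((d:ℤ) + 1) :=
            mul_le_mul_of_nonneg_right hle (by linarith)
          nlinarith
        exact no_odd_dvd_two_pow n ht1 htodd ⟨(d:ℤ) + 1, by rw [← hpow, ← hid2]⟩
    · -- p odd
      have hpnodd : Odd (p ^ n) := hpodd.pow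
      obtain ⟨w, hw⟩ := hpnodd
      have heven : 2 ∣ d ^ ν := by omega
      have hdvd : 2 ∣ d := Nat.Prime.dvd_of_dvd_pow Nat.prime_two heven
      have hdeq : d = 2 := ((Nat.prime_dvd_prime_iff_eq Nat.prime_two hd).mp hdvd).symm
      subst hdeq
      have hp3 : 3 ≤ p := by
        rcases hpodd with ⟨c, hc⟩; omega
      rcases Nat.even_or_odd n with hne | hno
      · -- n even : q = 9
        right
        obtain ⟨m, hm⟩ := hne
        have hm1 : 1 ≤ m := by omega
        have hpm1 : 1 ≤ p ^ m := Nat.one_le_pow _ _ (by omega)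
        have hpm3 : 3 ≤ p ^ m := le_trans hp3 (Nat.le_self_pow (by omega) p)
        have hpmodd : Odd (p ^ m) := hpodd.pow
        have hfac : (p ^ m - 1) * (p ^ m + 1) = 2 ^ ν := by
          have hsq : p ^ n = p ^ m * p ^ m := by rw [hm, ← pow_add]
          obtain ⟨b, hb⟩ : ∃ b, p ^ m = b + 1 := ⟨p ^ m - 1, by omega⟩
          have : (b + 1 - 1) * (b + 1 + 1) = (b+1) * (b+1) - 1 := by
            simp; ring_nf; omega
          rw [hb, this, ← hb, ← hsq, h]
        have hdva : (p ^ m - 1) ∣ 2 ^ ν := ⟨p ^ m + 1, hfac.symm⟩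
        have hdvb : (p ^ m + 1) ∣ 2 ^ ν := ⟨p ^ m - 1, by rw [← hfac]; ring⟩
        obtain ⟨a, ha, hae⟩ := (Nat.dvd_prime_pow Nat.prime_two).mp hdva
        obtain ⟨b, hb, hbe⟩ := (Nat.dvd_prime_pow Nat.prime_two).mp hdvb
        obtain ⟨c, hc⟩ := hpmodd
        have ha1 : 1 ≤ a := by
          rcases Nat.eq_zero_or_pos a with rfl | h'
          · simp at hae; omega
          · exact h'
        have hb2 : 2 ≤ b := by
          by_contra hb'
          interval_cases b <;> omega
        have h4b : 4 ∣ 2 ^ b := by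
          have : 2 ^ b = 4 * 2 ^ (b - 2) := by
            rw [show (4:ℕ) = 2^2 by norm_num, ← pow_add]; congr 1; omega
          omega
        have ha2 : a = 1 := by
          by_contra ha'
          have ha2' : 2 ≤ a := by omega
          have h4a : 4 ∣ 2 ^ a := by
            have : 2 ^ a = 4 * 2 ^ (a - 2) := by
              rw [show (4:ℕ) = 2^2 by norm_num, ← pow_add]; congr 1; omega
            omega
          omega
        have hpm : p ^ m = 3 := by rw [ha2] at hae; omega
        have hpeq : p = 3 := by
          have : p ∣ 3 := hpm ▸ dvd_pow_self p (by omega)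
          exact ((Nat.prime_dvd_prime_iff_eq hp Nat.prime_three).mp this)
        have hmeq : m = 1 := by
          subst hpeq
          have : (3:ℕ) ^ m = 3 ^ 1 := by rw [hpm]; norm_num
          exact Nat.pow_right_injective (by norm_num) this
        rw [hm, hmeq, hpeq]; norm_num
      · -- n odd : contradiction
        exfalso
        set t : ℤ := ∑ i ∈ Finset.range n, ((p:ℤ)) ^ i with hts
        have hid : t * ((p:ℤ) - 1) = (p:ℤ) ^ n - 1 := geom_sum_mul _ n
        have hpow : (p:ℤ) ^ n - 1 = 2 ^ ν := by
          have h2 : ((p:ℤ)) ^ n = 2 ^ ν + 1 := by exact_mod_cast hkey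
          linarith
        have htodd : Odd t := odd_geom_sum ((Int.odd_coe_nat p).mpr hpodd) hno
        have hp3' : (3:ℤ) ≤ (p:ℤ) := by exact_mod_cast hp3
        have hn3 : 3 ≤ n := by
          rcases hno with ⟨c, hc⟩; omega
        have hpn2 : (p:ℤ) ^ 2 ≤ (p:ℤ) ^ n := pow_le_pow_right₀ (by linarith) (by omega)
        have ht1 : 1 < t := by nlinarith
        exact no_odd_dvd_two_pow ν ht1 htodd ⟨(p:ℤ) - 1, by rw [← hpow, ← hid]⟩
end
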